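/- arXiv:2410.09692 — 2 statements merged into one kernel-verified Lean document; each statement's English description precedes it below -/
import Mathlib

section
/- For dropout random matrix V as above with keep probability p, the function W ↦ E[‖Y − (XW)⊙V‖_F²] is minimized (when XᵀX is invertible) at W = p·(XᵀX)⁻¹ XᵀY, provided XᵀX = c·I for some c > 0 (and then the minimizer equals (c/(c+λ))(XᵀX)⁻¹XᵀY with λ = c(1/p − 1)). -/
/-! The expected loss `E‖Y − M ⊙ V‖²` is, entry by entry, `(M − pY)²/p + (1 − p)Y²`, so
minimizing it over `M = XW` is the least-squares problem for `XW ≈ pY`, whose solution is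
`p(XᵀX)⁻¹XᵀY` by the normal equations. When `XᵀX = c·I`, the Tikhonov factor
`c/(c + c(1/p − 1))` is just `p`. -/

open MeasureTheory ProbabilityTheory Matrix

/-- Squared Frobenius norm of a real matrix. -/
noncomputable def frobSq {m n : Type*} [Fintype m] [Fintype n] (M : Matrix m n ℝ) : ℝ :=
  ∑ i, ∑ j, (M i j) ^ 2

section FrobSq

variable {m n k : Type*} [Fintype m] [Fintype n] [Fintype k]

lemma frobSq_nonneg (A : Matrix m n ℝ) : 0 ≤ frobSq A :=
  Finset.sum_nonneg fun _ _ => Finset.sum_nonneg fun _ _ => sq_nonneg _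

lemma sum_sum_mul_eq_trace_transpose_mul (A B : Matrix m n ℝ) :
    ∑ i, ∑ j, A i j * B i j = trace (Aᵀ * B) := by
  simp only [trace, diag, mul_apply, transpose_apply]
  exact Finset.sum_comm

lemma frobSq_add (A B : Matrix m n ℝ) :
    frobSq (A + B) = frobSq A + frobSq B + 2 * trace (Aᵀ * B) := by
  simp only [frobSq, ← sum_sum_mul_eq_trace_transpose_mul, Matrix.add_apply, Finset.mul_sum,
    ← Finset.sum_add_distrib]
  exact Finset.sum_congr rfl fun _ _ => Finset.sum_congr rfl fun _ _ => by ring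

/-- The residual `XW₀ − B` is orthogonal to the column space of `X`, so Pythagoras applies. -/
lemma frobSq_mul_sub_le_of_transpose_mul_eq_zero (X : Matrix m k ℝ) (B : Matrix m n ℝ)
    {W₀ : Matrix k n ℝ} (hW₀ : Xᵀ * (X * W₀ - B) = 0) (W : Matrix k n ℝ) :
    frobSq (X * W₀ - B) ≤ frobSq (X * W - B) := by
  have hsplit : X * W - B = X * (W - W₀) + (X * W₀ - B) := by
    rw [Matrix.mul_sub]; abel
  have hcross : trace ((X * (W - W₀))ᵀ * (X * W₀ - B)) = 0 := by
    rw [transpose_mul, Matrix.mul_assoc, hW₀, Matrix.mul_zero, trace_zero]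
  rw [hsplit, frobSq_add, hcross]
  linarith [frobSq_nonneg (X * (W - W₀))]

lemma frobSq_mul_sub_le_of_isUnit_det [DecidableEq k] (X : Matrix m k ℝ) (B : Matrix m n ℝ)
    (hX : IsUnit (Xᵀ * X).det) (W : Matrix k n ℝ) :
    frobSq (X * ((Xᵀ * X)⁻¹ * (Xᵀ * B)) - B) ≤ frobSq (X * W - B) := by
  refine frobSq_mul_sub_le_of_transpose_mul_eq_zero X B ?_ W
  simp only [Matrix.mul_sub, ← Matrix.mul_assoc]
  rw [mul_nonsing_inv _ hX, Matrix.one_mul, sub_self]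

end FrobSq

section Dropout

noncomputable def dropoutMeasure (p : ℝ) : Measure ℝ :=
  ENNReal.ofReal p • Measure.dirac (1 / p) + ENNReal.ofReal (1 - p) • Measure.dirac 0

lemma integrable_dropoutMeasure (p : ℝ) (f : ℝ → ℝ) : Integrable f (dropoutMeasure p) :=
  ((integrable_dirac enorm_lt_top).smul_measure ENNReal.ofReal_ne_top).add_measure
    ((integrable_dirac enorm_lt_top).smul_measure ENNReal.ofReal_ne_top)

lemma integral_dropoutMeasure {p : ℝ} (hp : 0 ≤ p) (hp1 : p ≤ 1) (f : ℝ → ℝ) :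
    ∫ x, f x ∂dropoutMeasure p = p * f (1 / p) + (1 - p) * f 0 := by
  rw [dropoutMeasure, integral_add_measure
      ((integrable_dirac enorm_lt_top).smul_measure ENNReal.ofReal_ne_top)
      ((integrable_dirac enorm_lt_top).smul_measure ENNReal.ofReal_ne_top),
    integral_smul_measure, integral_smul_measure, integral_dirac, integral_dirac,
    ENNReal.toReal_ofReal hp, ENNReal.toReal_ofReal (sub_nonneg.mpr hp1), smul_eq_mul,
    smul_eq_mul]

variable {Ω : Type*} [MeasurableSpace Ω] {μ : Measure Ω} {p : ℝ}

lemma integrable_sq_sub_mul_of_map_eq_dropoutMeasure {ξ : Ω → ℝ} (hξ : Measurable ξ)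
    (hlaw : μ.map ξ = dropoutMeasure p) (a b : ℝ) :
    Integrable (fun ω => (a - b * ξ ω) ^ 2) μ := by
  have hf : Measurable fun x : ℝ => (a - b * x) ^ 2 := by fun_prop
  refine (integrable_map_measure hf.aestronglyMeasurable hξ.aemeasurable).mp ?_
  rw [hlaw]
  exact integrable_dropoutMeasure p _

lemma integral_sq_sub_mul_of_map_eq_dropoutMeasure (hp : 0 < p) (hp1 : p ≤ 1) {ξ : Ω → ℝ}
    (hξ : Measurable ξ) (hlaw : μ.map ξ = dropoutMeasure p) (a b : ℝ) :
    ∫ ω, (a - b * ξ ω) ^ 2 ∂μ = (b - p * a) ^ 2 / p + (1 - p) * a ^ 2 := by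
  have hf : Measurable fun x : ℝ => (a - b * x) ^ 2 := by fun_prop
  rw [← integral_map hξ.aemeasurable hf.aestronglyMeasurable, hlaw,
    integral_dropoutMeasure hp.le hp1]
  field_simp
  ring

lemma integral_frobSq_sub_hadamard {m n : Type*} [Fintype m] [Fintype n]
    (hp : 0 < p) (hp1 : p ≤ 1) {V : Ω → Matrix m n ℝ}
    (hmeas : ∀ i j, Measurable fun ω => V ω i j)
    (hlaw : ∀ i j, μ.map (fun ω => V ω i j) = dropoutMeasure p) (Y M : Matrix m n ℝ) :
    ∫ ω, frobSq (Y - M ⊙ V ω) ∂μ = frobSq (M - p • Y) / p + (1 - p) * frobSq Y := by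
  have hint : ∀ i j, Integrable (fun ω => (Y i j - M i j * V ω i j) ^ 2) μ := fun i j =>
    integrable_sq_sub_mul_of_map_eq_dropoutMeasure (hmeas i j) (hlaw i j) _ _
  simp only [frobSq, Matrix.sub_apply, Matrix.hadamard_apply, Matrix.smul_apply, smul_eq_mul,
    Finset.sum_div, Finset.mul_sum, ← Finset.sum_add_distrib]
  rw [integral_finsetSum _ fun i _ => integrable_finsetSum _ fun j _ => hint i j]
  refine Finset.sum_congr rfl fun i _ => ?_
  rw [integral_finsetSum _ fun j _ => hint i j]
  exact Finset.sum_congr rfl fun j _ =>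
    integral_sq_sub_mul_of_map_eq_dropoutMeasure hp hp1 (hmeas i j) (hlaw i j) _ _

end Dropout

theorem stmt1_general {Ω : Type*} [MeasureSpace Ω]
    {N C D : ℕ} (p : ℝ) (hp : 0 < p) (hp1 : p ≤ 1)
    (Y : Matrix (Fin N) (Fin C) ℝ) (X : Matrix (Fin N) (Fin D) ℝ)
    (c : ℝ) (hc : 0 < c) (hX : Xᵀ * X = c • (1 : Matrix (Fin D) (Fin D) ℝ))
    (V : Ω → Matrix (Fin N) (Fin C) ℝ)
    (hmeas : ∀ i j, Measurable fun ω => V ω i j)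
    (hdist : ∀ i j, Measure.map (fun ω => V ω i j) ℙ
      = ENNReal.ofReal p • Measure.dirac (1 / p) + ENNReal.ofReal (1 - p) • Measure.dirac 0) :
    (∀ W : Matrix (Fin D) (Fin C) ℝ,
        ∫ ω, frobSq (Y - Matrix.hadamard (X * (p • ((Xᵀ * X)⁻¹ * (Xᵀ * Y)))) (V ω)) ≤
          ∫ ω, frobSq (Y - Matrix.hadamard (X * W) (V ω))) ∧
      p • ((Xᵀ * X)⁻¹ * (Xᵀ * Y)) =
        (c / (c + c * (1 / p - 1))) • ((Xᵀ * X)⁻¹ * (Xᵀ * Y)) := by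
  have hdet : IsUnit (Xᵀ * X).det := by
    rw [hX, det_smul, det_one, mul_one, isUnit_iff_ne_zero]
    exact pow_ne_zero _ hc.ne'
  have hW₀ : p • ((Xᵀ * X)⁻¹ * (Xᵀ * Y)) = (Xᵀ * X)⁻¹ * (Xᵀ * (p • Y)) := by
    rw [Matrix.mul_smul, Matrix.mul_smul]
  refine ⟨fun W => ?_, ?_⟩
  · rw [integral_frobSq_sub_hadamard hp hp1 hmeas hdist,
      integral_frobSq_sub_hadamard hp hp1 hmeas hdist, hW₀]
    gcongr
    exact frobSq_mul_sub_le_of_isUnit_det X (p • Y) hdet W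
  · rw [show c / (c + c * (1 / p - 1)) = p by field_simp; ring]

/-- If `XᵀX = c·I` with `c > 0`, the expected dropout least-squares loss
`W ↦ E[‖Y − (XW)⊙V‖_F²]` is minimized at `W₀ = p·(XᵀX)⁻¹XᵀY`, which moreover equals
`(c/(c+λ))·(XᵀX)⁻¹XᵀY` with `λ = c(1/p − 1)`. -/
theorem stmt1 {Ω : Type*} [MeasureSpace Ω] [IsProbabilityMeasure (ℙ : Measure Ω)]
    {N C D : ℕ} (p : ℝ) (hp : 0 < p) (hp1 : p ≤ 1)
    (Y : Matrix (Fin N) (Fin C) ℝ) (X : Matrix (Fin N) (Fin D) ℝ)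
    (c : ℝ) (hc : 0 < c) (hX : Xᵀ * X = c • (1 : Matrix (Fin D) (Fin D) ℝ))
    (V : Ω → Matrix (Fin N) (Fin C) ℝ)
    (hmeas : ∀ i j, Measurable fun ω => V ω i j)
    (hdist : ∀ i j, Measure.map (fun ω => V ω i j) ℙ
      = ENNReal.ofReal p • Measure.dirac (1 / p) + ENNReal.ofReal (1 - p) • Measure.dirac 0)
    (hindep : iIndepFun
      (fun (ij : Fin N × Fin C) ω => V ω ij.1 ij.2) ℙ) :
    (∀ W : Matrix (Fin D) (Fin C) ℝ,
        ∫ ω, frobSq (Y - Matrix.hadamard (X * (p • ((Xᵀ * X)⁻¹ * (Xᵀ * Y)))) (V ω)) ≤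
          ∫ ω, frobSq (Y - Matrix.hadamard (X * W) (V ω))) ∧
      p • ((Xᵀ * X)⁻¹ * (Xᵀ * Y)) =
        (c / (c + c * (1 / p - 1))) • ((Xᵀ * X)⁻¹ * (Xᵀ * Y)) :=
  stmt1_general p hp hp1 Y X c hc hX V hmeas hdist
end

section
/- Identity: for A ∈ R^{D×r}, B ∈ R^{r×C}, X ∈ R^{N×D}, and V a random N×C matrix with i.i.d. entries of mean 1 and variance (1−λ)/λ, one has E[‖((XA)⊙V)B‖_F²] = ‖XAB‖_F² + ((1−λ)/λ) Σ_{i=1}^r ‖X A_{:,i}‖₂² ‖B_{i,:}‖₂². -/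
/-!
Entry `(n, c)` of `((XA) ⊙ V) B` is `∑ᵢ (XA)ₙᵢ Bᵢc Vₙᵢ`, a linear combination of the independent
entries of row `n` of `V`. Its second moment is its squared mean plus its variance: the mean is
`(XAB)ₙc` because `E Vₙᵢ = 1`, and by pairwise independence the variance is
`∑ᵢ ((XA)ₙᵢ Bᵢc)² Var Vₙᵢ` with `Var Vₙᵢ = 1/λ - 1 = (1 - λ)/λ`. Summing over `n` and `c` gives
the identity.
-/

open MeasureTheory ProbabilityTheory Matrix

noncomputable def dropoutLaw (l : ℝ) : Measure ℝ :=
  ENNReal.ofReal l • Measure.dirac (1 / l) + ENNReal.ofReal (1 - l) • Measure.dirac 0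

lemma ae_abs_le_dropoutLaw {l : ℝ} (hl : 0 < l) : ∀ᵐ x ∂dropoutLaw l, |x| ≤ 1 / l := by
  refine ae_add_measure_iff.2 ⟨Measure.ae_smul_measure ?_ _, Measure.ae_smul_measure ?_ _⟩ <;>
    simp only [ae_dirac_eq, Filter.eventually_pure]
  · exact (abs_of_pos (one_div_pos.2 hl)).le
  · simpa using hl.le

lemma integral_dropoutLaw_of_map_zero {l : ℝ} (hl : 0 < l) {f : ℝ → ℝ} (hf0 : f 0 = 0) :
    ∫ x, f x ∂dropoutLaw l = l * f (1 / l) := by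
  rw [dropoutLaw, integral_add_measure, integral_smul_measure, integral_smul_measure,
    integral_dirac, integral_dirac, hf0, ENNReal.toReal_ofReal hl.le]
  · simp
  · exact (integrable_dirac (by simp)).smul_measure ENNReal.ofReal_ne_top
  · exact (integrable_dirac (by simp)).smul_measure ENNReal.ofReal_ne_top

section HasDropoutLaw

variable {Ω : Type*} [MeasurableSpace Ω] {μ : Measure Ω} {g : Ω → ℝ} {l : ℝ}

lemma memLp_of_map_eq_dropoutLaw [IsFiniteMeasure μ] (hl : 0 < l) (hg : AEMeasurable g μ)
    (h : μ.map g = dropoutLaw l) (p : ENNReal) : MemLp g p μ :=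
  .of_bound hg.aestronglyMeasurable (1 / l) <| ae_of_ae_map hg <| h ▸ ae_abs_le_dropoutLaw hl

lemma integral_comp_of_map_eq_dropoutLaw (hl : 0 < l) (hg : AEMeasurable g μ)
    (h : μ.map g = dropoutLaw l) {f : ℝ → ℝ} (hf : Measurable f) (hf0 : f 0 = 0) :
    ∫ ω, f (g ω) ∂μ = l * f (1 / l) := by
  rw [← integral_map hg hf.aestronglyMeasurable, h, integral_dropoutLaw_of_map_zero hl hf0]

lemma integral_of_map_eq_dropoutLaw (hl : 0 < l) (hg : AEMeasurable g μ)
    (h : μ.map g = dropoutLaw l) : ∫ ω, g ω ∂μ = 1 := by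
  rw [integral_comp_of_map_eq_dropoutLaw hl hg h (f := fun x => x) measurable_id rfl]
  field_simp

lemma variance_of_map_eq_dropoutLaw [IsProbabilityMeasure μ] (hl : 0 < l)
    (hg : AEMeasurable g μ) (h : μ.map g = dropoutLaw l) : variance g μ = (1 - l) / l := by
  rw [variance_eq_sub (memLp_of_map_eq_dropoutLaw hl hg h 2), integral_of_map_eq_dropoutLaw hl hg h]
  simp only [Pi.pow_apply]
  rw [integral_comp_of_map_eq_dropoutLaw hl hg h (f := fun x => x ^ 2) (by fun_prop) (by simp)]
  field_simp

end HasDropoutLaw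

lemma integral_sq_sum_mul_of_pairwise_indepFun {Ω ι : Type*} [MeasurableSpace Ω] {μ : Measure Ω}
    [IsProbabilityMeasure μ] {Y : ι → Ω → ℝ} {s : Finset ι} (hY : ∀ i ∈ s, MemLp (Y i) 2 μ)
    (hind : Set.Pairwise s fun i j => IndepFun (Y i) (Y j) μ) (a : ι → ℝ) :
    ∫ ω, (∑ i ∈ s, a i * Y i ω) ^ 2 ∂μ
      = (∑ i ∈ s, a i * ∫ ω, Y i ω ∂μ) ^ 2 + ∑ i ∈ s, a i ^ 2 * variance (Y i) μ := by
  set Z : ι → Ω → ℝ := fun i ω => a i * Y i ω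
  have hZ : ∀ i ∈ s, MemLp (Z i) 2 μ := fun i hi => (hY i hi).const_mul (a i)
  have hS : MemLp (∑ i ∈ s, Z i) 2 μ := memLp_finsetSum' s hZ
  have hvar : variance (∑ i ∈ s, Z i) μ = ∑ i ∈ s, a i ^ 2 * variance (Y i) μ := by
    rw [IndepFun.variance_sum hZ fun i hi j hj hij => (hind hi hj hij).comp
      (measurable_const_mul (a i)) (measurable_const_mul (a j))]
    exact Finset.sum_congr rfl fun i _ => variance_const_mul _ _ _
  have hmean : ∫ ω, (∑ i ∈ s, Z i) ω ∂μ = ∑ i ∈ s, a i * ∫ ω, Y i ω ∂μ := by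
    simp only [Finset.sum_apply, Z]
    rw [integral_finsetSum _ fun i hi => (hZ i hi).integrable one_le_two]
    exact Finset.sum_congr rfl fun i _ => integral_const_mul _ _
  rw [← hvar, variance_eq_sub hS, ← hmean]
  simp [Z]

lemma frobSq_hadamard_mul {m n k : Type*} [Fintype m] [Fintype n] [Fintype k]
    (M W : Matrix m k ℝ) (B : Matrix k n ℝ) :
    frobSq (hadamard M W * B) = ∑ a, ∑ c, (∑ i, M a i * B i c * W a i) ^ 2 := by
  simp only [frobSq, mul_apply, hadamard_apply]
  refine Fintype.sum_congr _ _ fun a => Fintype.sum_congr _ _ fun c => ?_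
  exact congrArg (· ^ 2) (Fintype.sum_congr _ _ fun i => mul_right_comm _ _ _)

lemma sum_sum_sum_mul_sq {m n k : Type*} [Fintype m] [Fintype n] [Fintype k]
    (M : Matrix m k ℝ) (B : Matrix k n ℝ) :
    ∑ a, ∑ c, ∑ i, (M a i * B i c) ^ 2 = ∑ i, (∑ a, M a i ^ 2) * ∑ c, B i c ^ 2 := by
  simp only [mul_pow, Finset.sum_mul_sum]
  conv_rhs => rw [Finset.sum_comm]
  exact Fintype.sum_congr _ _ fun a => Finset.sum_comm

theorem stmt9_general {Ω : Type*} [MeasureSpace Ω] [IsProbabilityMeasure (ℙ : Measure Ω)]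
    {N C D r : ℕ} (l : ℝ) (hl : 0 < l)
    (X : Matrix (Fin N) (Fin D) ℝ)
    (A : Matrix (Fin D) (Fin r) ℝ) (B : Matrix (Fin r) (Fin C) ℝ)
    (V : Ω → Matrix (Fin N) (Fin r) ℝ)
    (hmeas : ∀ i j, Measurable fun ω => V ω i j)
    (hdist : ∀ i j, Measure.map (fun ω => V ω i j) ℙ
      = ENNReal.ofReal l • Measure.dirac (1 / l) + ENNReal.ofReal (1 - l) • Measure.dirac 0)
    (hindep : iIndepFun
      (fun (ij : Fin N × Fin r) ω => V ω ij.1 ij.2) ℙ) :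
    ∫ ω, frobSq (Matrix.hadamard (X * A) (V ω) * B) =
      frobSq (X * A * B)
        + ((1 - l) / l) *
            ∑ i : Fin r, (∑ n, ((X * A) n i) ^ 2) * (∑ c, (B i c) ^ 2) := by
  set M := X * A
  have hV n i : AEMeasurable (fun ω => V ω n i) ℙ := (hmeas n i).aemeasurable
  have hL2 n i : MemLp (fun ω => V ω n i) 2 ℙ :=
    memLp_of_map_eq_dropoutLaw hl (hV n i) (hdist n i) 2
  have hentry n c : ∫ ω, (∑ i, M n i * B i c * V ω n i) ^ 2
      = (∑ i, M n i * B i c) ^ 2 + (1 - l) / l * ∑ i, (M n i * B i c) ^ 2 := by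
    rw [integral_sq_sum_mul_of_pairwise_indepFun (Y := fun i ω => V ω n i) (fun i _ => hL2 n i)
      (fun i _ j _ hij => hindep.indepFun (i := (n, i)) (j := (n, j)) (by simp [hij]))]
    simp only [integral_of_map_eq_dropoutLaw hl (hV n _) (hdist n _),
      variance_of_map_eq_dropoutLaw hl (hV n _) (hdist n _), mul_one, Finset.mul_sum, mul_comm]
  have hint n c : Integrable (fun ω => (∑ i, M n i * B i c * V ω n i) ^ 2) ℙ :=
    (memLp_finsetSum _ fun i _ => (hL2 n i).const_mul _).integrable_sq
  simp only [frobSq_hadamard_mul]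
  rw [integral_finsetSum _ fun n _ => integrable_finsetSum _ fun c _ => hint n c]
  simp only [integral_finsetSum _ fun c _ => hint _ c, hentry, Finset.sum_add_distrib,
    ← Finset.mul_sum, sum_sum_sum_mul_sq]
  simp only [frobSq, mul_apply]

/-- Second moment of the dropped-out LoRA output: for a dropout mask `V ∈ ℝ^{N×r}`
with i.i.d. entries `1/λ` w.p. `λ` and `0` otherwise,
`E[‖((XA)⊙V)B‖²] = ‖XAB‖² + ((1−λ)/λ)Σᵢ‖XA_{:,i}‖²‖B_{i,:}‖²`. -/
theorem stmt9 {Ω : Type*} [MeasureSpace Ω] [IsProbabilityMeasure (ℙ : Measure Ω)]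
    {N C D r : ℕ} (l : ℝ) (hl : 0 < l) (hl1 : l < 1)
    (X : Matrix (Fin N) (Fin D) ℝ)
    (A : Matrix (Fin D) (Fin r) ℝ) (B : Matrix (Fin r) (Fin C) ℝ)
    (V : Ω → Matrix (Fin N) (Fin r) ℝ)
    (hmeas : ∀ i j, Measurable fun ω => V ω i j)
    (hdist : ∀ i j, Measure.map (fun ω => V ω i j) ℙ
      = ENNReal.ofReal l • Measure.dirac (1 / l) + ENNReal.ofReal (1 - l) • Measure.dirac 0)
    (hindep : iIndepFun
      (fun (ij : Fin N × Fin r) ω => V ω ij.1 ij.2) ℙ) :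
    ∫ ω, frobSq (Matrix.hadamard (X * A) (V ω) * B) =
      frobSq (X * A * B)
        + ((1 - l) / l) *
            ∑ i : Fin r, (∑ n, ((X * A) n i) ^ 2) * (∑ c, (B i c) ^ 2) :=
  stmt9_general l hl X A B V hmeas hdist hindep
end
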